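/- arXiv:2304.09096 — 5 statements merged into one kernel-verified Lean document; each statement's English description precedes it below -/
import Mathlib

section
/- Let X ∈ ℝ^{n_m×n}, Θ ∈ ℝ^{n_u×n}, λ ∈ ℝ, and let V, V' ∈ ℝ^{n_m×n_u} be two rating matrices differing in a single entry: V' = V + w·E_{ij} for some index pair (i,j) and real w with |w| ≤ τ. If every row x_k of X satisfies ‖x_k‖₂ ≤ C, then the Frobenius norm of the difference of the two corresponding gradients with respect to Θ is bounded by τC, i.e., ‖((XΘᵀ − V)ᵀX + λΘ) − ((XΘᵀ − V')ᵀX + λΘ)‖_F = ‖(V' − V)ᵀX‖_F ≤ τC. -/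
/-!
The `XΘᵀ` and `λΘ` terms cancel, leaving `(V' − V)ᵀX = w E_{ji} X`, a matrix whose only
nonzero row is `w` times row `i` of `X`; its Frobenius norm is therefore `|w| ‖x_i‖₂ ≤ τC`.
-/

open Matrix

attribute [local instance] Matrix.frobeniusNormedAddCommGroup

namespace Matrix

theorem sub_transpose_mul_add_sub_sub_transpose_mul_add {R l m n : Type*} [Ring R] [Fintype l]
    (A V V' : Matrix l m R) (X : Matrix l n R) (B : Matrix m n R) :
    ((A - V)ᵀ * X + B) - ((A - V')ᵀ * X + B) = (V' - V)ᵀ * X := by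
  simp only [transpose_sub, Matrix.sub_mul]
  abel

theorem frobenius_norm_eq_norm_row_of_forall_ne {α m n : Type*} [Fintype m] [Fintype n]
    [NormedAddCommGroup α] {A : Matrix m n α} (j : m) (hA : ∀ a ≠ j, A a = 0) :
    ‖A‖ = ‖WithLp.toLp 2 (A j)‖ := by
  rw [frobenius_norm_def, PiLp.norm_eq_of_L2, Real.sqrt_eq_rpow,
    Finset.sum_eq_single j (fun a _ ha => by simp [hA a ha]) (by simp)]
  simp

theorem frobenius_norm_single_mul {𝕜 l m n : Type*} [NormedField 𝕜] [Fintype l] [Fintype m]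
    [Fintype n] [DecidableEq l] [DecidableEq m] (j : l) (i : m) (c : 𝕜) (X : Matrix m n 𝕜) :
    ‖single j i c * X‖ = ‖c‖ * ‖WithLp.toLp 2 (X i)‖ := by
  rw [frobenius_norm_eq_norm_row_of_forall_ne j
    (fun a ha => funext fun b => single_mul_apply_of_ne c j i a b ha X)]
  have hrow : (single j i c * X) j = c • X i := funext fun b => single_mul_apply_same c j i b X
  rw [hrow, WithLp.toLp_smul, norm_smul]

end Matrix

/-- ℓ₂ sensitivity of the gradient `∇_Θ C = (XΘᵀ − V)ᵀX + λΘ`: if the rating matrices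
`V` and `V' = V + w·E_{ij}` differ in a single entry with `|w| ≤ τ`, and every row of `X`
has Euclidean norm at most `C`, then the Frobenius norm of the difference of the two
gradients, which equals `‖(V' − V)ᵀX‖_F`, is at most `τC`. -/
theorem sensitivity_grad_Theta (n_m n_u n : ℕ)
    (X : Matrix (Fin n_m) (Fin n) ℝ) (Θ : Matrix (Fin n_u) (Fin n) ℝ) (lam : ℝ)
    (V V' : Matrix (Fin n_m) (Fin n_u) ℝ)
    (i : Fin n_m) (j : Fin n_u) (w τ C : ℝ)
    (hV' : V' = V + w • Matrix.single i j (1 : ℝ))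
    (hw : |w| ≤ τ)
    (hrows : ∀ k : Fin n_m, Real.sqrt (∑ l, (X k l) ^ 2) ≤ C) :
    ‖((X * Θᵀ - V)ᵀ * X + lam • Θ) - ((X * Θᵀ - V')ᵀ * X + lam • Θ)‖
        = ‖(V' - V)ᵀ * X‖ ∧
      ‖(V' - V)ᵀ * X‖ ≤ τ * C := by
  refine ⟨by rw [sub_transpose_mul_add_sub_sub_transpose_mul_add], ?_⟩
  have hdiff : (V' - V)ᵀ = single j i w := by
    rw [hV', add_sub_cancel_left, smul_single, smul_eq_mul, mul_one, transpose_single]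
  have hrow : ‖WithLp.toLp 2 (X i)‖ = √(∑ l, X i l ^ 2) := by
    simp [EuclideanSpace.norm_eq]
  rw [hdiff, frobenius_norm_single_mul, Real.norm_eq_abs, hrow]
  exact mul_le_mul hw (hrows i) (Real.sqrt_nonneg _) ((abs_nonneg w).trans hw)
end

section
/- Let J be a positive natural number, ε_i ∈ (0,1), δ ∈ (0,1), δ_r ∈ (0,1), τ > 0, C > 0, and set σ = (τC/ε_i)·√(2·log(1.25/δ)) and Δ = τC. Then for every α > 1, αJΔ²/(2σ²) + log(1/δ_r)/(α − 1) ≥ Jε_i²/(4·log(1.25/δ)) + 2·√( Jε_i²·log(1/δ_r) / (4·log(1.25/δ)) ), and equality holds at α = 1 + √( 2σ²·log(1/δ_r) / (JΔ²) ). Hence the smallest achievable overall privacy risk is ε_opt = Jε_i²/(4·log(1.25/δ)) + 2·√( Jε_i²·log(1/δ_r) / (4·log(1.25/δ)) ). -/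
/-!
The Rényi-to-DP conversion gives the risk `α a + b / (α - 1)` with `a = JΔ²/(2σ²)` and
`b = log(1/δ_r)`. Writing `α = 1 + t`, this is `a + (t a + b / t)`, and by AM-GM
`t a + b / t ≥ 2√(ab)`, with equality at `t = √(b/a)`. For the Gaussian noise scale of
Algorithm 1 one has `a = Jε_i²/(4 log(1.25/δ))`, which gives `ε_opt`.
-/

open Real

namespace Real

theorem two_sqrt_mul_le_mul_add_div {a b t : ℝ} (ha : 0 ≤ a) (hb : 0 ≤ b) (ht : 0 < t) :
    2 * √(a * b) ≤ t * a + b / t := by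
  have hsplit : √(a * b) = √(t * a) * √(b / t) := by
    rw [← sqrt_mul (by positivity)]
    congr 1
    field_simp
  calc 2 * √(a * b) = 2 * √(t * a) * √(b / t) := by rw [hsplit, mul_assoc]
    _ ≤ √(t * a) ^ 2 + √(b / t) ^ 2 := two_mul_le_add_sq _ _
    _ = t * a + b / t := by rw [sq_sqrt (by positivity), sq_sqrt (by positivity)]

theorem sqrt_div_mul_add_div_sqrt_div {a b : ℝ} (ha : 0 ≤ a) (hb : 0 ≤ b) :
    √(b / a) * a + b / √(b / a) = 2 * √(a * b) := by
  rcases ha.eq_or_lt with rfl | ha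
  · simp
  have hmul : √(b / a) * a = √(a * b) := by
    rw [← sqrt_sq ha.le, ← sqrt_mul (by positivity), sqrt_sq ha.le]
    congr 1
    field_simp
  have hdiv : b / √(b / a) = √(b / a) * a := by
    nth_rw 1 [← div_mul_cancel₀ b ha.ne']
    rw [mul_div_right_comm, div_sqrt]
  rw [hdiv, ← two_mul, hmul]

theorem add_two_sqrt_mul_le_mul_add_div_sub_one {a b α : ℝ} (ha : 0 ≤ a) (hb : 0 ≤ b)
    (hα : 1 < α) : a + 2 * √(a * b) ≤ α * a + b / (α - 1) := by
  have := two_sqrt_mul_le_mul_add_div ha hb (sub_pos.2 hα)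
  linarith

theorem one_add_sqrt_div_mul_add_div_eq {a b : ℝ} (ha : 0 ≤ a) (hb : 0 ≤ b) :
    (1 + √(b / a)) * a + b / ((1 + √(b / a)) - 1) = a + 2 * √(a * b) := by
  rw [add_sub_cancel_left, ← sqrt_div_mul_add_div_sqrt_div ha hb]
  ring

end Real

theorem mul_sq_div_two_mul_sq_gaussian_scale (J Δ ε L : ℝ) (hΔ : Δ ≠ 0) (hL : 0 ≤ L) :
    J * Δ ^ 2 / (2 * (Δ / ε * √(2 * L)) ^ 2) = J * ε ^ 2 / (4 * L) := by
  rw [mul_pow, sq_sqrt (by positivity)]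
  field_simp
  ring

theorem overall_privacy_risk_opt_general (J : ℕ)
    (εi δ δr τ C : ℝ)
    (hδ : δ ∈ Set.Ioo (0 : ℝ) 1)
    (hδr : δr ∈ Set.Ioo (0 : ℝ) 1) (hτ : 0 < τ) (hC : 0 < C)
    (σ Δ : ℝ)
    (hσ : σ = (τ * C / εi) * Real.sqrt (2 * Real.log (1.25 / δ)))
    (hΔ : Δ = τ * C) :
    (∀ α : ℝ, 1 < α →
        α * (J : ℝ) * Δ ^ 2 / (2 * σ ^ 2) + Real.log (1 / δr) / (α - 1)
          ≥ (J : ℝ) * εi ^ 2 / (4 * Real.log (1.25 / δ))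
            + 2 * Real.sqrt ((J : ℝ) * εi ^ 2 * Real.log (1 / δr)
                / (4 * Real.log (1.25 / δ)))) ∧
      ((1 + Real.sqrt (2 * σ ^ 2 * Real.log (1 / δr) / ((J : ℝ) * Δ ^ 2)))
            * (J : ℝ) * Δ ^ 2 / (2 * σ ^ 2)
          + Real.log (1 / δr)
            / ((1 + Real.sqrt (2 * σ ^ 2 * Real.log (1 / δr) / ((J : ℝ) * Δ ^ 2))) - 1)
          = (J : ℝ) * εi ^ 2 / (4 * Real.log (1.25 / δ))
            + 2 * Real.sqrt ((J : ℝ) * εi ^ 2 * Real.log (1 / δr)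
                / (4 * Real.log (1.25 / δ)))) := by
  have hL : 0 ≤ log (1.25 / δ) := log_nonneg (by rw [le_div_iff₀ hδ.1]; linarith [hδ.2])
  have hB : 0 ≤ log (1 / δr) := log_nonneg (one_le_one_div hδr.1 hδr.2.le)
  have hA : (J : ℝ) * Δ ^ 2 / (2 * σ ^ 2) = J * εi ^ 2 / (4 * log (1.25 / δ)) := by
    rw [hσ, hΔ]
    exact mul_sq_div_two_mul_sq_gaussian_scale _ _ _ _ (by positivity) hL
  set A := (J : ℝ) * εi ^ 2 / (4 * log (1.25 / δ))
  have hA0 : 0 ≤ A := by positivity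
  have hAB : (J : ℝ) * εi ^ 2 * log (1 / δr) / (4 * log (1.25 / δ)) = A * log (1 / δr) :=
    mul_div_right_comm _ _ _
  have hBA : 2 * σ ^ 2 * log (1 / δr) / (J * Δ ^ 2) = log (1 / δr) / A := by
    rw [← hA, div_div_eq_mul_div, mul_comm]
  rw [hAB, hBA]
  refine ⟨fun α hα => ?_, ?_⟩
  · convert add_two_sqrt_mul_le_mul_add_div_sub_one hA0 hB hα using 2
    rw [← hA]
    ring
  · convert one_add_sqrt_div_mul_add_div_eq hA0 hB using 2
    rw [← hA]
    ring

/-- Overall privacy risk of Algorithm 1 via Rényi differential privacy: with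
`σ = (τC/ε_i)·√(2 log(1.25/δ))` and sensitivity `Δ = τC`, for every `α > 1` the overall
privacy risk `αJΔ²/(2σ²) + log(1/δ_r)/(α − 1)` is at least
`ε_opt = Jε_i²/(4 log(1.25/δ)) + 2√(Jε_i² log(1/δ_r)/(4 log(1.25/δ)))`,
with equality at `α = 1 + √(2σ² log(1/δ_r)/(JΔ²))`. -/
theorem overall_privacy_risk_opt (J : ℕ) (hJ : 0 < J)
    (εi δ δr τ C : ℝ)
    (hεi : εi ∈ Set.Ioo (0 : ℝ) 1) (hδ : δ ∈ Set.Ioo (0 : ℝ) 1)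
    (hδr : δr ∈ Set.Ioo (0 : ℝ) 1) (hτ : 0 < τ) (hC : 0 < C)
    (σ Δ : ℝ)
    (hσ : σ = (τ * C / εi) * Real.sqrt (2 * Real.log (1.25 / δ)))
    (hΔ : Δ = τ * C) :
    (∀ α : ℝ, 1 < α →
        α * (J : ℝ) * Δ ^ 2 / (2 * σ ^ 2) + Real.log (1 / δr) / (α - 1)
          ≥ (J : ℝ) * εi ^ 2 / (4 * Real.log (1.25 / δ))
            + 2 * Real.sqrt ((J : ℝ) * εi ^ 2 * Real.log (1 / δr)
                / (4 * Real.log (1.25 / δ)))) ∧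
      ((1 + Real.sqrt (2 * σ ^ 2 * Real.log (1 / δr) / ((J : ℝ) * Δ ^ 2)))
            * (J : ℝ) * Δ ^ 2 / (2 * σ ^ 2)
          + Real.log (1 / δr)
            / ((1 + Real.sqrt (2 * σ ^ 2 * Real.log (1 / δr) / ((J : ℝ) * Δ ^ 2))) - 1)
          = (J : ℝ) * εi ^ 2 / (4 * Real.log (1.25 / δ))
            + 2 * Real.sqrt ((J : ℝ) * εi ^ 2 * Real.log (1 / δr)
                / (4 * Real.log (1.25 / δ)))) :=
  overall_privacy_risk_opt_general J εi δ δr τ C hδ hδr hτ hC σ Δ hσ hΔ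
end

section
/- Let σ > 0, m, m' ∈ ℝ, and α ∈ ℝ, and let p_m(x) = (1/(σ√(2π)))·exp(−(x−m)²/(2σ²)) denote the density of N(m, σ²). Then ∫_ℝ p_m(x)^α · p_{m'}(x)^{1−α} dx = exp( α(α−1)(m−m')² / (2σ²) ). In particular, for α > 1 the Rényi divergence of order α between N(m, σ²) and N(m', σ²), D_α = (1/(α−1))·log ∫ p_m^α p_{m'}^{1−α}, equals α(m−m')²/(2σ²); hence the Gaussian mechanism with ℓ₂ sensitivity 1 and noise N(0, σ²) satisfies (α, α/(2σ²))-Rényi differential privacy. -/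
/-!
Completing the square in the exponent gives
`p_m^α · p_{m'}^{1-α} = exp (α (α - 1) (m - m')² / (2σ²)) · p_{α m + (1 - α) m'}`,
and a Gaussian density integrates to `1`.
-/

open Real MeasureTheory

/-- The density of the one-dimensional Gaussian distribution `N(m, σ²)`. -/
noncomputable def gaussPdf (σ m x : ℝ) : ℝ :=
  (1 / (σ * Real.sqrt (2 * Real.pi))) * Real.exp (-(x - m) ^ 2 / (2 * σ ^ 2))

open ProbabilityTheory

lemma gaussPdf_eq_gaussianPDFReal {σ : ℝ} (hσ : 0 ≤ σ) (m : ℝ) :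
    gaussPdf σ m = gaussianPDFReal m (σ ^ 2).toNNReal := by
  ext x
  have hsqrt : √(2 * π * σ ^ 2) = σ * √(2 * π) := by
    rw [sqrt_mul (by positivity), sqrt_sq hσ]; ring
  simp only [gaussPdf, gaussianPDFReal, Real.coe_toNNReal _ (sq_nonneg σ), hsqrt, one_div]

lemma integral_gaussPdf {σ : ℝ} (hσ : 0 < σ) (m : ℝ) : ∫ x, gaussPdf σ m x = 1 := by
  rw [gaussPdf_eq_gaussianPDFReal hσ.le]
  exact integral_gaussianPDFReal_eq_one m (by simpa using hσ.ne')

lemma rpow_mul_rpow_one_sub {c : ℝ} (hc : 0 < c) (α : ℝ) : c ^ α * c ^ (1 - α) = c := by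
  rw [← rpow_add hc, add_sub_cancel, rpow_one]

lemma gaussian_exponent_geometric_mixture (σ m m' α x : ℝ) :
    -(x - m) ^ 2 / (2 * σ ^ 2) * α + -(x - m') ^ 2 / (2 * σ ^ 2) * (1 - α)
      = α * (α - 1) * (m - m') ^ 2 / (2 * σ ^ 2)
        + -(x - (α * m + (1 - α) * m')) ^ 2 / (2 * σ ^ 2) := by
  ring

lemma gaussPdf_rpow_mul_gaussPdf_rpow_one_sub {σ : ℝ} (hσ : 0 < σ) (m m' α x : ℝ) :
    gaussPdf σ m x ^ α * gaussPdf σ m' x ^ (1 - α)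
      = exp (α * (α - 1) * (m - m') ^ 2 / (2 * σ ^ 2))
        * gaussPdf σ (α * m + (1 - α) * m') x := by
  have hc : 0 < 1 / (σ * √(2 * π)) := by positivity
  simp only [gaussPdf]
  rw [mul_rpow hc.le (exp_nonneg _), mul_rpow hc.le (exp_nonneg _), ← exp_mul, ← exp_mul]
  calc _ = ((1 / (σ * √(2 * π))) ^ α * (1 / (σ * √(2 * π))) ^ (1 - α))
          * exp (-(x - m) ^ 2 / (2 * σ ^ 2) * α + -(x - m') ^ 2 / (2 * σ ^ 2) * (1 - α)) := by
        rw [exp_add]; ring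
    _ = _ := by
        rw [rpow_mul_rpow_one_sub hc, gaussian_exponent_geometric_mixture, exp_add]; ring

theorem integral_gaussPdf_rpow_mul_gaussPdf_rpow_one_sub {σ : ℝ} (hσ : 0 < σ) (m m' α : ℝ) :
    ∫ x, gaussPdf σ m x ^ α * gaussPdf σ m' x ^ (1 - α)
      = exp (α * (α - 1) * (m - m') ^ 2 / (2 * σ ^ 2)) := by
  simp only [gaussPdf_rpow_mul_gaussPdf_rpow_one_sub hσ]
  rw [integral_const_mul, integral_gaussPdf hσ, mul_one]

/-- Rényi divergence between two Gaussians with common variance: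
`∫ p_m(x)^α p_{m'}(x)^{1−α} dx = exp(α(α−1)(m−m')²/(2σ²))`; hence for `α > 1` the
Rényi divergence of order `α` between `N(m, σ²)` and `N(m', σ²)` equals
`α(m−m')²/(2σ²)`, so the Gaussian mechanism with ℓ₂ sensitivity `1` and noise
`N(0, σ²)` satisfies `(α, α/(2σ²))`-Rényi differential privacy. -/
theorem gaussian_renyi_divergence (σ m m' α : ℝ) (hσ : 0 < σ) :
    (∫ x : ℝ, gaussPdf σ m x ^ α * gaussPdf σ m' x ^ (1 - α))
        = Real.exp (α * (α - 1) * (m - m') ^ 2 / (2 * σ ^ 2)) ∧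
      (1 < α →
        (1 / (α - 1))
            * Real.log (∫ x : ℝ, gaussPdf σ m x ^ α * gaussPdf σ m' x ^ (1 - α))
          = α * (m - m') ^ 2 / (2 * σ ^ 2)) ∧
      (1 < α → |m - m'| ≤ 1 →
        (1 / (α - 1))
            * Real.log (∫ x : ℝ, gaussPdf σ m x ^ α * gaussPdf σ m' x ^ (1 - α))
          ≤ α / (2 * σ ^ 2)) := by
  have hint := integral_gaussPdf_rpow_mul_gaussPdf_rpow_one_sub hσ m m' α
  have hdiv (hα : 1 < α) :
      (1 / (α - 1)) * log (∫ x : ℝ, gaussPdf σ m x ^ α * gaussPdf σ m' x ^ (1 - α))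
        = α * (m - m') ^ 2 / (2 * σ ^ 2) := by
    rw [hint, log_exp]
    field_simp [(sub_pos.mpr hα).ne']
  refine ⟨hint, hdiv, fun hα hsens => ?_⟩
  rw [hdiv hα]
  have hsq : (m - m') ^ 2 ≤ 1 := (sq_le_one_iff_abs_le_one _).mpr hsens
  gcongr
  exact mul_le_of_le_one_right (by linarith) hsq
end

section
/- Let μ and ν be probability measures on a measurable space with μ absolutely continuous with respect to ν, let α > 1, ε_r ≥ 0, and δ_r ∈ (0,1). If ∫ (dμ/dν)(x)^α dν(x) ≤ exp((α−1)·ε_r) (i.e., the Rényi divergence of order α of μ from ν is at most ε_r), then for every measurable set S, μ(S) ≤ exp( ε_r + log(1/δ_r)/(α−1) )·ν(S) + δ_r. -/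
/-!
Write `f = dμ/dν` and `c = exp ε`. On the part of `S` where `f ≤ c`, `μ` is at most `c · ν`.
The set `{f > c}` is small by Markov's inequality applied to `f ^ (α - 1)` under `μ`:
`c ^ (α - 1) · μ {f > c} ≤ ∫ f ^ α dν ≤ exp ((α - 1) ε_r)`, and `ε` is chosen so that the right
side divided by `c ^ (α - 1)` is exactly `δ_r`.
-/

open MeasureTheory ENNReal

namespace MeasureTheory.Measure

variable {Ω : Type*} [MeasurableSpace Ω] {μ ν : Measure Ω} [μ.HaveLebesgueDecomposition ν]

lemma measure_le_mul_add_measure_rnDeriv_gt (hac : μ ≪ ν) {S : Set Ω} (hS : MeasurableSet S)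
    (c : ℝ≥0∞) : μ S ≤ c * ν S + μ {x | c < μ.rnDeriv ν x} := by
  set A := {x | c < μ.rnDeriv ν x}
  have hA : MeasurableSet A := measurableSet_lt measurable_const (μ.measurable_rnDeriv ν)
  have h_low : μ (S \ A) ≤ c * ν S :=
    calc μ (S \ A) = ∫⁻ x in S \ A, μ.rnDeriv ν x ∂ν :=
          (setLIntegral_rnDeriv' hac (hS.diff hA)).symm
      _ ≤ ∫⁻ _ in S \ A, c ∂ν := setLIntegral_mono' (hS.diff hA) fun x hx ↦ not_lt.1 hx.2
      _ = c * ν (S \ A) := setLIntegral_const _ _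
      _ ≤ c * ν S := by gcongr; exact Set.sdiff_subset
  calc μ S ≤ μ (S \ A ∪ A) := by
        rw [Set.sdiff_union_self]; exact measure_mono Set.subset_union_left
    _ ≤ μ (S \ A) + μ A := measure_union_le _ _
    _ ≤ c * ν S + μ A := by gcongr

lemma rpow_mul_measure_rnDeriv_gt_le_lintegral (hac : μ ≪ ν) {α : ℝ} (hα : 1 ≤ α)
    (c : ℝ≥0∞) :
    c ^ (α - 1) * μ {x | c < μ.rnDeriv ν x} ≤ ∫⁻ x, μ.rnDeriv ν x ^ α ∂ν := by
  set A := {x | c < μ.rnDeriv ν x}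
  have hA : MeasurableSet A := measurableSet_lt measurable_const (μ.measurable_rnDeriv ν)
  calc c ^ (α - 1) * μ A = ∫⁻ x in A, c ^ (α - 1) * μ.rnDeriv ν x ∂ν := by
        rw [lintegral_const_mul _ (μ.measurable_rnDeriv ν), setLIntegral_rnDeriv' hac hA]
    _ ≤ ∫⁻ x in A, μ.rnDeriv ν x ^ α ∂ν := by
        refine setLIntegral_mono' hA fun x (hx : c < _) ↦ ?_
        calc c ^ (α - 1) * μ.rnDeriv ν x
            ≤ μ.rnDeriv ν x ^ (α - 1) * μ.rnDeriv ν x ^ (1 : ℝ) := by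
              rw [rpow_one]; gcongr
          _ = μ.rnDeriv ν x ^ α := by
              rw [← rpow_add_of_nonneg _ _ (by linarith) zero_le_one, sub_add_cancel]
    _ ≤ ∫⁻ x, μ.rnDeriv ν x ^ α ∂ν := setLIntegral_le_lintegral _ _

end MeasureTheory.Measure

lemma Real.exp_add_log_div_rpow_mul {α δ : ℝ} (hα : α ≠ 1) (hδ : 0 < δ) (ε : ℝ) :
    Real.exp (ε + Real.log (1 / δ) / (α - 1)) ^ (α - 1) * δ = Real.exp ((α - 1) * ε) := by
  have hα1 : α - 1 ≠ 0 := sub_ne_zero.2 hα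
  rw [← Real.exp_mul, ← Real.exp_log hδ, ← Real.exp_add, Real.exp_log hδ, one_div,
    Real.log_inv]
  congr 1
  field_simp
  ring

theorem rdp_to_dp_general {Ω : Type*} [MeasurableSpace Ω] (μ ν : Measure Ω)
    [IsProbabilityMeasure μ] [IsProbabilityMeasure ν] (hac : μ ≪ ν)
    (α εr δr : ℝ) (hα : 1 < α) (hδr : δr ∈ Set.Ioo (0 : ℝ) 1)
    (hdiv : ∫⁻ x, (μ.rnDeriv ν x) ^ α ∂ν ≤ ENNReal.ofReal (Real.exp ((α - 1) * εr))) :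
    ∀ S : Set Ω, MeasurableSet S →
      μ S ≤ ENNReal.ofReal (Real.exp (εr + Real.log (1 / δr) / (α - 1))) * ν S
        + ENNReal.ofReal δr := by
  intro S hS
  set c := ENNReal.ofReal (Real.exp (εr + Real.log (1 / δr) / (α - 1)))
  have hc : c ^ (α - 1) * ENNReal.ofReal δr = ENNReal.ofReal (Real.exp ((α - 1) * εr)) := by
    rw [ofReal_rpow_of_pos (Real.exp_pos _), ← ofReal_mul (by positivity),
      Real.exp_add_log_div_rpow_mul hα.ne' hδr.1]
  have hc_ne_zero : c ^ (α - 1) ≠ 0 := by positivity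
  have hc_ne_top : c ^ (α - 1) ≠ ∞ := rpow_ne_top_of_nonneg (by linarith) ofReal_ne_top
  have h_tail : μ {x | c < μ.rnDeriv ν x} ≤ ENNReal.ofReal δr := by
    rw [← ENNReal.mul_le_mul_iff_right hc_ne_zero hc_ne_top, hc]
    exact (Measure.rpow_mul_measure_rnDeriv_gt_le_lintegral hac hα.le c).trans hdiv
  exact (Measure.measure_le_mul_add_measure_rnDeriv_gt hac hS c).trans (by gcongr)

/-- Conversion from Rényi differential privacy to approximate differential privacy:
if probability measures `μ ≪ ν` satisfy `∫ (dμ/dν)^α dν ≤ exp((α−1)ε_r)` (i.e. the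
order-`α` Rényi divergence of `μ` from `ν` is at most `ε_r`), then for every measurable
set `S`, `μ(S) ≤ exp(ε_r + log(1/δ_r)/(α−1))·ν(S) + δ_r`. -/
theorem rdp_to_dp {Ω : Type*} [MeasurableSpace Ω] (μ ν : Measure Ω)
    [IsProbabilityMeasure μ] [IsProbabilityMeasure ν] (hac : μ ≪ ν)
    (α εr δr : ℝ) (hα : 1 < α) (hεr : 0 ≤ εr) (hδr : δr ∈ Set.Ioo (0 : ℝ) 1)
    (hdiv : ∫⁻ x, (μ.rnDeriv ν x) ^ α ∂ν ≤ ENNReal.ofReal (Real.exp ((α - 1) * εr))) :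
    ∀ S : Set Ω, MeasurableSet S →
      μ S ≤ ENNReal.ofReal (Real.exp (εr + Real.log (1 / δr) / (α - 1))) * ν S
        + ENNReal.ofReal δr :=
  rdp_to_dp_general μ ν hac α εr δr hα hδr hdiv
end

section
/- Let μ₁, μ₂, ν₁, ν₂ be σ-finite measures on measurable spaces, with μ₁ ≪ ν₁ and μ₂ ≪ ν₂, and let α ≥ 0. Then ∫ (d(μ₁ × μ₂)/d(ν₁ × ν₂))(x, y)^α d(ν₁ × ν₂)(x, y) = ( ∫ (dμ₁/dν₁)(x)^α dν₁(x) ) · ( ∫ (dμ₂/dν₂)(y)^α dν₂(y) ); in particular, for probability measures and α > 1, the Rényi divergence of order α of the product measures is additive: D_α(μ₁×μ₂ ‖ ν₁×ν₂) = D_α(μ₁‖ν₁) + D_α(μ₂‖ν₂). -/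
open MeasureTheory ENNReal

/-!
Writing `μᵢ = νᵢ.withDensity (dμᵢ/dνᵢ)`, the product `μ₁.prod μ₂` is `ν₁.prod ν₂` with density
`(x, y) ↦ dμ₁/dν₁ x * dμ₂/dν₂ y`, so this is its Radon–Nikodym derivative. Both factors are
finite almost everywhere, so its `α`-th power splits for every real `α`, and Tonelli factorizes
the integral. Taking logarithms turns the product into a sum.
-/

namespace MeasureTheory.Measure

variable {X Y : Type*} [MeasurableSpace X] [MeasurableSpace Y]
  {μ₁ ν₁ : Measure X} {μ₂ ν₂ : Measure Y}
  [SigmaFinite μ₁] [SigmaFinite ν₁] [SigmaFinite μ₂] [SigmaFinite ν₂]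

lemma prod_eq_withDensity_rnDeriv_mul (hac₁ : μ₁ ≪ ν₁) (hac₂ : μ₂ ≪ ν₂) :
    μ₁.prod μ₂ = (ν₁.prod ν₂).withDensity fun p => μ₁.rnDeriv ν₁ p.1 * μ₂.rnDeriv ν₂ p.2 := by
  conv_lhs => rw [← withDensity_rnDeriv_eq μ₁ ν₁ hac₁, ← withDensity_rnDeriv_eq μ₂ ν₂ hac₂]
  exact prod_withDensity (measurable_rnDeriv μ₁ ν₁) (measurable_rnDeriv μ₂ ν₂)

lemma rnDeriv_prod_ae_eq (hac₁ : μ₁ ≪ ν₁) (hac₂ : μ₂ ≪ ν₂) :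
    (μ₁.prod μ₂).rnDeriv (ν₁.prod ν₂)
      =ᵐ[ν₁.prod ν₂] fun p => μ₁.rnDeriv ν₁ p.1 * μ₂.rnDeriv ν₂ p.2 := by
  rw [prod_eq_withDensity_rnDeriv_mul hac₁ hac₂]
  exact rnDeriv_withDensity _
    ((measurable_rnDeriv μ₁ ν₁).comp measurable_fst |>.mul
      ((measurable_rnDeriv μ₂ ν₂).comp measurable_snd))

lemma lintegral_rpow_rnDeriv_prod (hac₁ : μ₁ ≪ ν₁) (hac₂ : μ₂ ≪ ν₂) (α : ℝ) :
    ∫⁻ p, (μ₁.prod μ₂).rnDeriv (ν₁.prod ν₂) p ^ α ∂(ν₁.prod ν₂)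
      = (∫⁻ x, μ₁.rnDeriv ν₁ x ^ α ∂ν₁) * ∫⁻ y, μ₂.rnDeriv ν₂ y ^ α ∂ν₂ := by
  have h_split : ∀ᵐ p ∂(ν₁.prod ν₂), (μ₁.prod μ₂).rnDeriv (ν₁.prod ν₂) p ^ α
      = μ₁.rnDeriv ν₁ p.1 ^ α * μ₂.rnDeriv ν₂ p.2 ^ α := by
    filter_upwards [rnDeriv_prod_ae_eq hac₁ hac₂,
      quasiMeasurePreserving_fst.ae (rnDeriv_ne_top μ₁ ν₁),
      quasiMeasurePreserving_snd.ae (rnDeriv_ne_top μ₂ ν₂)] with p hp h₁ h₂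
    rw [hp, mul_rpow_of_ne_top h₁ h₂]
  rw [lintegral_congr_ae h_split]
  exact lintegral_prod_mul ((measurable_rnDeriv μ₁ ν₁).pow_const α).aemeasurable
    ((measurable_rnDeriv μ₂ ν₂).pow_const α).aemeasurable

end MeasureTheory.Measure

theorem renyi_divergence_product_general {X Y : Type*} [MeasurableSpace X] [MeasurableSpace Y]
    (μ₁ ν₁ : Measure X) (μ₂ ν₂ : Measure Y)
    [SigmaFinite μ₁] [SigmaFinite ν₁] [SigmaFinite μ₂] [SigmaFinite ν₂]
    (hac₁ : μ₁ ≪ ν₁) (hac₂ : μ₂ ≪ ν₂) (α : ℝ) :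
    (∫⁻ p : X × Y, ((μ₁.prod μ₂).rnDeriv (ν₁.prod ν₂) p) ^ α ∂(ν₁.prod ν₂))
        = (∫⁻ x, (μ₁.rnDeriv ν₁ x) ^ α ∂ν₁) * (∫⁻ y, (μ₂.rnDeriv ν₂ y) ^ α ∂ν₂) ∧
      (IsProbabilityMeasure μ₁ → IsProbabilityMeasure ν₁ →
        IsProbabilityMeasure μ₂ → IsProbabilityMeasure ν₂ → 1 < α →
        (((α - 1)⁻¹ : ℝ) : EReal)
            * ENNReal.log (∫⁻ p : X × Y,
                ((μ₁.prod μ₂).rnDeriv (ν₁.prod ν₂) p) ^ α ∂(ν₁.prod ν₂))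
          = (((α - 1)⁻¹ : ℝ) : EReal)
              * ENNReal.log (∫⁻ x, (μ₁.rnDeriv ν₁ x) ^ α ∂ν₁)
            + (((α - 1)⁻¹ : ℝ) : EReal)
              * ENNReal.log (∫⁻ y, (μ₂.rnDeriv ν₂ y) ^ α ∂ν₂)) := by
  have h_factor := Measure.lintegral_rpow_rnDeriv_prod hac₁ hac₂ α
  refine ⟨h_factor, fun _ _ _ _ hα => ?_⟩
  have h_coeff : (0 : EReal) ≤ ((α - 1)⁻¹ : ℝ) :=
    EReal.coe_nonneg.2 (inv_nonneg.2 (sub_nonneg.2 hα.le))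
  rw [h_factor, ENNReal.log_mul_add,
    EReal.left_distrib_of_nonneg_of_ne_top h_coeff (EReal.coe_ne_top _)]

/-- Composition property of Rényi differential privacy: for σ-finite measures with
`μ₁ ≪ ν₁` and `μ₂ ≪ ν₂` and `α ≥ 0`, the `α`-moment of the Radon–Nikodym derivative of
the product measures factorizes,
`∫ (d(μ₁×μ₂)/d(ν₁×ν₂))^α d(ν₁×ν₂) = (∫ (dμ₁/dν₁)^α dν₁)·(∫ (dμ₂/dν₂)^α dν₂)`;
in particular, for probability measures and `α > 1`, the order-`α` Rényi divergence of
the products is additive: `D_α(μ₁×μ₂‖ν₁×ν₂) = D_α(μ₁‖ν₁) + D_α(μ₂‖ν₂)`. -/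
theorem renyi_divergence_product {X Y : Type*} [MeasurableSpace X] [MeasurableSpace Y]
    (μ₁ ν₁ : Measure X) (μ₂ ν₂ : Measure Y)
    [SigmaFinite μ₁] [SigmaFinite ν₁] [SigmaFinite μ₂] [SigmaFinite ν₂]
    (hac₁ : μ₁ ≪ ν₁) (hac₂ : μ₂ ≪ ν₂) (α : ℝ) (hα : 0 ≤ α) :
    (∫⁻ p : X × Y, ((μ₁.prod μ₂).rnDeriv (ν₁.prod ν₂) p) ^ α ∂(ν₁.prod ν₂))
        = (∫⁻ x, (μ₁.rnDeriv ν₁ x) ^ α ∂ν₁) * (∫⁻ y, (μ₂.rnDeriv ν₂ y) ^ α ∂ν₂) ∧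
      (IsProbabilityMeasure μ₁ → IsProbabilityMeasure ν₁ →
        IsProbabilityMeasure μ₂ → IsProbabilityMeasure ν₂ → 1 < α →
        (((α - 1)⁻¹ : ℝ) : EReal)
            * ENNReal.log (∫⁻ p : X × Y,
                ((μ₁.prod μ₂).rnDeriv (ν₁.prod ν₂) p) ^ α ∂(ν₁.prod ν₂))
          = (((α - 1)⁻¹ : ℝ) : EReal)
              * ENNReal.log (∫⁻ x, (μ₁.rnDeriv ν₁ x) ^ α ∂ν₁)
            + (((α - 1)⁻¹ : ℝ) : EReal)
              * ENNReal.log (∫⁻ y, (μ₂.rnDeriv ν₂ y) ^ α ∂ν₂)) :=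
  renyi_divergence_product_general μ₁ ν₁ μ₂ ν₂ hac₁ hac₂ α
end
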